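/- arXiv:1202.0430 — 3 statements merged into one kernel-verified Lean document; each statement's English description precedes it below -/
import Mathlib

section
/- (Integrability condition of the Buchert equations.) Let a, μ, R, Q : I → ℝ be differentiable functions on an interval I with a > 0, satisfying: (i) 3·a''/a = -½μ + Q (averaged Raychaudhuri), (ii) 3·(a'/a)² = μ - ½R - ½Q (averaged Hamiltonian constraint), and (iii) μ' + 3(a'/a)·μ = 0 (averaged continuity). Then, writing H = a'/a, the integrability condition ∂_t R + 2H·R = -∂_t Q - 6H·Q holds on I. -/
/-! Differentiating the Hamiltonian constraint, which holds on an open set, gives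
`6 H H' = μ' - R'/2 - Q'/2` with `H' = ä/a - H²`. Substituting `ä/a` from the Raychaudhuri
equation, `H²` from the constraint itself and `μ'` from the continuity equation leaves
exactly the integrability condition. -/

open Filter Topology

theorem hasDerivAt_deriv_div_self {𝕜 : Type*} [NontriviallyNormedField 𝕜] {f f' : 𝕜 → 𝕜}
    {f'' x : 𝕜} (hf : HasDerivAt f (f' x) x) (hf' : HasDerivAt f' f'' x) (hx : f x ≠ 0) :
    HasDerivAt (fun y => f' y / f y) (f'' / f x - (f' x / f x) ^ 2) x :=
  (hf'.fun_div hf hx).congr_deriv (by field_simp)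

theorem HasDerivAt.eq_of_eventuallyEq {𝕜 F : Type*} [NontriviallyNormedField 𝕜]
    [NormedAddCommGroup F] [NormedSpace 𝕜 F] {f g : 𝕜 → F} {f' g' : F} {x : 𝕜}
    (hf : HasDerivAt f f' x) (hg : HasDerivAt g g' x) (hfg : f =ᶠ[𝓝 x] g) : f' = g' :=
  (hf.congr_of_eventuallyEq hfg.symm).unique hg

theorem integrability_of_buchert_equations {H H' A μ μ' R R' Q Q' : ℝ}
    (hH' : H' = A - H ^ 2)
    (hray : 3 * A = -(1 / 2) * μ + Q)
    (hham : 3 * H ^ 2 = μ - (1 / 2) * R - (1 / 2) * Q)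
    (hham' : 6 * H * H' = μ' - (1 / 2) * R' - (1 / 2) * Q')
    (hcont : μ' + 3 * H * μ = 0) :
    R' + 2 * H * R = -Q' - 6 * H * Q := by
  linear_combination 2 * hham' - 12 * H * hH' - 4 * H * hray + 4 * H * hham + 2 * hcont

theorem buchert_integrability_condition_general
    (I : Set ℝ) (hI : IsOpen I)
    (a a' a'' μ μ' R R' Q Q' : ℝ → ℝ)
    (ha : ∀ t ∈ I, HasDerivAt a (a' t) t)
    (ha' : ∀ t ∈ I, HasDerivAt a' (a'' t) t)
    (hμ : ∀ t ∈ I, HasDerivAt μ (μ' t) t)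
    (hR : ∀ t ∈ I, HasDerivAt R (R' t) t)
    (hQ : ∀ t ∈ I, HasDerivAt Q (Q' t) t)
    (hapos : ∀ t ∈ I, 0 < a t)
    (hray : ∀ t ∈ I, 3 * a'' t / a t = -(1 / 2) * μ t + Q t)
    (hham : ∀ t ∈ I, 3 * (a' t / a t) ^ 2 = μ t - (1 / 2) * R t - (1 / 2) * Q t)
    (hcont : ∀ t ∈ I, μ' t + 3 * (a' t / a t) * μ t = 0) :
    ∀ t ∈ I, R' t + 2 * (a' t / a t) * R t
      = -(Q' t) - 6 * (a' t / a t) * Q t := by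
  intro t ht
  have hH := hasDerivAt_deriv_div_self (ha t ht) (ha' t ht) (hapos t ht).ne'
  have hham' : 6 * (a' t / a t) * (a'' t / a t - (a' t / a t) ^ 2)
      = μ' t - (1 / 2) * R' t - (1 / 2) * Q' t := by
    refine HasDerivAt.eq_of_eventuallyEq ?_
      (((hμ t ht).sub ((hR t ht).const_mul _)).sub ((hQ t ht).const_mul _))
      (eventually_of_mem (hI.mem_nhds ht) hham)
    exact ((hH.fun_pow 2).const_mul 3).congr_deriv (by ring)
  refine integrability_of_buchert_equations rfl ?_ (hham t ht) hham' (hcont t ht)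
  rw [← hray t ht, mul_div_assoc]

/-- Integrability condition of the Buchert equations: if `a, μ, R, Q` are
differentiable on an open interval `I` with `a > 0` and satisfy the averaged
Raychaudhuri equation, the averaged Hamiltonian constraint, and the averaged
continuity equation, then with `H = a'/a` one has
`∂_t R + 2H·R = -∂_t Q - 6H·Q` on `I`. -/
theorem buchert_integrability_condition
    (I : Set ℝ) (hI : IsOpen I) (hconn : I.OrdConnected)
    (a a' a'' μ μ' R R' Q Q' : ℝ → ℝ)
    (ha : ∀ t ∈ I, HasDerivAt a (a' t) t)
    (ha' : ∀ t ∈ I, HasDerivAt a' (a'' t) t)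
    (hμ : ∀ t ∈ I, HasDerivAt μ (μ' t) t)
    (hR : ∀ t ∈ I, HasDerivAt R (R' t) t)
    (hQ : ∀ t ∈ I, HasDerivAt Q (Q' t) t)
    (hapos : ∀ t ∈ I, 0 < a t)
    (hray : ∀ t ∈ I, 3 * a'' t / a t = -(1 / 2) * μ t + Q t)
    (hham : ∀ t ∈ I, 3 * (a' t / a t) ^ 2 = μ t - (1 / 2) * R t - (1 / 2) * Q t)
    (hcont : ∀ t ∈ I, μ' t + 3 * (a' t / a t) * μ t = 0) :
    ∀ t ∈ I, R' t + 2 * (a' t / a t) * R t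
      = -(Q' t) - 6 * (a' t / a t) * Q t :=
  buchert_integrability_condition_general I hI a a' a'' μ μ' R R' Q Q' ha ha' hμ hR hQ hapos hray
    hham hcont
end

section
/- (N-dimensional integrability condition.) Let N ≥ 2 and let a, μ, R, Q : I → ℝ be differentiable with a > 0, satisfying: (i) N·a''/a = ((N-2)/(1-N))·μ + Q + (2/(N-1))·Λ, (ii) (N(N-1)/2)·(a'/a)² = μ - ½R - ½Q + Λ, (iii) μ' + N(a'/a)·μ = 0, where Λ is a real constant. Then with H = a'/a one has 2N·H·Q + Q' = -2H·R - R'; in particular the cosmological constant Λ cancels from the integrability condition. -/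
/-!
Differentiating the Hamiltonian constraint along `I` expresses `μ' - R'/2 - Q'/2` through
`H` and `Ḣ = a''/a - H²`. Eliminating `a''/a` with the Raychaudhuri equation and `μ'` with
the continuity equation, and then `H²` with the Hamiltonian constraint itself, leaves a relation
between `Q, R` and their derivatives only; `Λ` enters the Raychaudhuri equation and the
Hamiltonian constraint in exactly the proportion in which it cancels.
-/

theorem hasDerivAt_deriv_div_self_s10 {a a' : ℝ → ℝ} {a'' t : ℝ} (ha : HasDerivAt a (a' t) t)
    (ha' : HasDerivAt a' a'' t) (hat : a t ≠ 0) :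
    HasDerivAt (fun s => a' s / a s) (a'' / a t - (a' t / a t) ^ 2) t :=
  (ha'.fun_div ha hat).congr_deriv <| by field_simp

theorem HasDerivAt.unique_of_eqOn {f g : ℝ → ℝ} {f' g' t : ℝ} {I : Set ℝ} (hI : IsOpen I)
    (ht : t ∈ I) (hfg : Set.EqOn f g I) (hf : HasDerivAt f f' t) (hg : HasDerivAt g g' t) :
    f' = g' :=
  hf.unique <| (Filter.eventuallyEq_of_mem (hI.mem_nhds ht) hfg).symm.hasDerivAt_iff.mp hg

theorem hamiltonian_constraint_differentiated {N Λ : ℝ} {I : Set ℝ} (hI : IsOpen I)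
    {a a' a'' μ μ' R R' Q Q' : ℝ → ℝ}
    (ha : ∀ t ∈ I, HasDerivAt a (a' t) t)
    (ha' : ∀ t ∈ I, HasDerivAt a' (a'' t) t)
    (hμ : ∀ t ∈ I, HasDerivAt μ (μ' t) t)
    (hR : ∀ t ∈ I, HasDerivAt R (R' t) t)
    (hQ : ∀ t ∈ I, HasDerivAt Q (Q' t) t)
    (ha₀ : ∀ t ∈ I, a t ≠ 0)
    (hham : ∀ t ∈ I, N * (N - 1) / 2 * (a' t / a t) ^ 2
      = μ t - (1 / 2) * R t - (1 / 2) * Q t + Λ) :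
    ∀ t ∈ I, N * (N - 1) / 2 * (2 * (a' t / a t) * (a'' t / a t - (a' t / a t) ^ 2))
      = μ' t - (1 / 2) * R' t - (1 / 2) * Q' t := by
  intro t ht
  have hlhs := ((hasDerivAt_deriv_div_self_s10 (ha t ht) (ha' t ht) (ha₀ t ht)).pow 2).const_mul
    (N * (N - 1) / 2)
  have hrhs := (((hμ t ht).sub ((hR t ht).const_mul (1 / 2))).sub
    ((hQ t ht).const_mul (1 / 2))).add_const Λ
  convert HasDerivAt.unique_of_eqOn hI ht hham hlhs hrhs using 1
  ring

theorem integrability_of_field_equations {N Λ H x μ μ' R R' Q Q' : ℝ} (hN : N ≠ 1)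
    (hray : N * x = (N - 2) / (1 - N) * μ + Q + 2 / (N - 1) * Λ)
    (hham : N * (N - 1) / 2 * H ^ 2 = μ - (1 / 2) * R - (1 / 2) * Q + Λ)
    (hdham : N * (N - 1) / 2 * (2 * H * (x - H ^ 2)) = μ' - (1 / 2) * R' - (1 / 2) * Q')
    (hcont : μ' + N * H * μ = 0) :
    2 * N * H * Q + Q' = -2 * H * R - R' := by
  have hN1 : N - 1 ≠ 0 := sub_ne_zero.mpr hN
  have hray' : N * (N - 1) * x = -(N - 2) * μ + (N - 1) * Q + 2 * Λ := by
    rw [show 1 - N = -(N - 1) by ring] at hray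
    field_simp at hray
    linear_combination hray
  linear_combination 2 * hdham - 2 * H * hray' + 4 * H * hham + 2 * hcont

theorem buchert_integrability_condition_N_general
    (N : ℕ) (hN : 2 ≤ N) (Λ : ℝ)
    (I : Set ℝ) (hI : IsOpen I)
    (a a' a'' μ μ' R R' Q Q' : ℝ → ℝ)
    (ha : ∀ t ∈ I, HasDerivAt a (a' t) t)
    (ha' : ∀ t ∈ I, HasDerivAt a' (a'' t) t)
    (hμ : ∀ t ∈ I, HasDerivAt μ (μ' t) t)
    (hR : ∀ t ∈ I, HasDerivAt R (R' t) t)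
    (hQ : ∀ t ∈ I, HasDerivAt Q (Q' t) t)
    (hapos : ∀ t ∈ I, 0 < a t)
    (hray : ∀ t ∈ I, N * a'' t / a t
      = ((N : ℝ) - 2) / (1 - (N : ℝ)) * μ t + Q t + 2 / ((N : ℝ) - 1) * Λ)
    (hham : ∀ t ∈ I, (N : ℝ) * ((N : ℝ) - 1) / 2 * (a' t / a t) ^ 2
      = μ t - (1 / 2) * R t - (1 / 2) * Q t + Λ)
    (hcont : ∀ t ∈ I, μ' t + N * (a' t / a t) * μ t = 0) :
    ∀ t ∈ I, 2 * N * (a' t / a t) * Q t + Q' t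
      = -2 * (a' t / a t) * R t - R' t := by
  intro t ht
  have hN1 : (N : ℝ) ≠ 1 := by exact_mod_cast (by omega : N ≠ 1)
  have hdham := hamiltonian_constraint_differentiated hI ha ha' hμ hR hQ (fun s hs => (hapos s hs).ne') hham t ht
  refine integrability_of_field_equations hN1 ?_ (hham t ht) hdham (hcont t ht)
  rw [← mul_div_assoc]
  exact hray t ht

/-- The (N+1)-dimensional integrability condition: for `N ≥ 2` and
differentiable `a, μ, R, Q` on an open interval `I` with `a > 0`, satisfying the
averaged N-dimensional Raychaudhuri equation, Hamiltonian constraint and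
continuity equation (with cosmological constant `Λ`), one has, with `H = a'/a`,
`2N·H·Q + Q' = -2H·R - R'`; in particular `Λ` cancels out. -/
theorem buchert_integrability_condition_N
    (N : ℕ) (hN : 2 ≤ N) (Λ : ℝ)
    (I : Set ℝ) (hI : IsOpen I) (hconn : I.OrdConnected)
    (a a' a'' μ μ' R R' Q Q' : ℝ → ℝ)
    (ha : ∀ t ∈ I, HasDerivAt a (a' t) t)
    (ha' : ∀ t ∈ I, HasDerivAt a' (a'' t) t)
    (hμ : ∀ t ∈ I, HasDerivAt μ (μ' t) t)
    (hR : ∀ t ∈ I, HasDerivAt R (R' t) t)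
    (hQ : ∀ t ∈ I, HasDerivAt Q (Q' t) t)
    (hapos : ∀ t ∈ I, 0 < a t)
    (hray : ∀ t ∈ I, N * a'' t / a t
      = ((N : ℝ) - 2) / (1 - (N : ℝ)) * μ t + Q t + 2 / ((N : ℝ) - 1) * Λ)
    (hham : ∀ t ∈ I, (N : ℝ) * ((N : ℝ) - 1) / 2 * (a' t / a t) ^ 2
      = μ t - (1 / 2) * R t - (1 / 2) * Q t + Λ)
    (hcont : ∀ t ∈ I, μ' t + N * (a' t / a t) * μ t = 0) :
    ∀ t ∈ I, 2 * N * (a' t / a t) * Q t + Q' t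
      = -2 * (a' t / a t) * R t - R' t :=
  buchert_integrability_condition_N_general N hN Λ I hI a a' a'' μ μ' R R' Q Q' ha ha' hμ hR hQ
    hapos hray hham hcont
end

section
/- (Backreaction in 2+1 dimensions is constrained to a^{-4}.) Let a, Q : I → ℝ be differentiable with a > 0, H = a'/a, and suppose the average spatial curvature is R(t) = C·a(t)^{-2} for a constant C (as forced by the Gauss–Bonnet theorem on a compact averaging surface), and that the 2-dimensional integrability condition 4H·Q + Q' = -2H·R - R' holds on I. Then a⁴·Q is constant on I, i.e. Q(t) = A·a(t)^{-4} for some constant A. -/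
/-!
Writing `H = a'/a`, one has `(aⁿ Q)' = aⁿ (n H Q + Q')`. Since `a² R = C` is constant, this
identity with `n = 2` gives `2 H R + R' = 0`, so the integrability condition reduces to
`4 H Q + Q' = 0`, i.e. `(a⁴ Q)' = 0`, and `a⁴ Q` is constant on the connected open set `I`.
-/

open Filter Topology

theorem HasDerivAt.pow_mul_logDeriv {a Q : ℝ → ℝ} {a' Q' t : ℝ} (n : ℕ)
    (ha : HasDerivAt a a' t) (hQ : HasDerivAt Q Q' t) (hat : a t ≠ 0) :
    HasDerivAt (fun u => a u ^ n * Q u) (a t ^ n * (n * (a' / a t) * Q t + Q')) t := by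
  have hvalue : a t ^ n * (n * (a' / a t) * Q t + Q')
      = n * a t ^ (n - 1) * a' * Q t + a t ^ n * Q' := by
    rcases n with _ | n
    · simp
    · field_simp
      push_cast
      ring
  rw [hvalue]
  exact (ha.pow n).mul hQ

theorem natCast_mul_div_mul_add_eq_zero_of_eventuallyEq_div_pow {a R : ℝ → ℝ}
    {a' R' C t : ℝ} (n : ℕ) (ha : HasDerivAt a a' t) (hR : HasDerivAt R R' t)
    (hRC : R =ᶠ[𝓝 t] fun u => C / a u ^ n) (hat : a t ≠ 0) :
    n * (a' / a t) * R t + R' = 0 := by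
  have hconst : (fun u => a u ^ n * R u) =ᶠ[𝓝 t] fun _ => C := by
    have hne : ∀ᶠ u in 𝓝 t, a u ≠ 0 := ha.continuousAt.eventually_ne hat
    filter_upwards [hRC, hne] with u hRu hau
    rw [hRu, mul_div_cancel₀ _ (pow_ne_zero n hau)]
  have hzero := (ha.pow_mul_logDeriv n hR hat).unique
    ((hasDerivAt_const t C).congr_of_eventuallyEq hconst)
  exact (mul_eq_zero.mp hzero).resolve_left (pow_ne_zero n hat)

/-- Backreaction in 2+1 dimensions is constrained to `a^{-4}`: if the average
spatial curvature is `R = C·a^{-2}` (as forced by Gauss–Bonnet on a compact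
averaging surface) and the 2-dimensional integrability condition
`4H·Q + Q' = -2H·R - R'` holds (with `H = a'/a`), then `a⁴·Q` is constant, i.e.
`Q(t) = A·a(t)^{-4}` for some constant `A`. -/
theorem backreaction_two_plus_one
    (I : Set ℝ) (hI : IsOpen I) (hconn : I.OrdConnected)
    (a a' Q Q' R R' : ℝ → ℝ) (C : ℝ)
    (ha : ∀ t ∈ I, HasDerivAt a (a' t) t)
    (hQd : ∀ t ∈ I, HasDerivAt Q (Q' t) t)
    (hRd : ∀ t ∈ I, HasDerivAt R (R' t) t)
    (hapos : ∀ t ∈ I, 0 < a t)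
    (hRC : ∀ t ∈ I, R t = C / a t ^ 2)
    (hic : ∀ t ∈ I, 4 * (a' t / a t) * Q t + Q' t
      = -2 * (a' t / a t) * R t - R' t) :
    (∀ t ∈ I, ∀ s ∈ I, a t ^ 4 * Q t = a s ^ 4 * Q s) ∧
    ∃ A : ℝ, ∀ t ∈ I, Q t = A / a t ^ 4 := by
  have hderiv : ∀ t ∈ I, HasDerivAt (fun u => a u ^ 4 * Q u) 0 t := by
    intro t ht
    have hat : a t ≠ 0 := (hapos t ht).ne'
    have hcurv : (2 : ℕ) * (a' t / a t) * R t + R' t = 0 :=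
      natCast_mul_div_mul_add_eq_zero_of_eventuallyEq_div_pow 2 (ha t ht) (hRd t ht)
        (eventually_of_mem (hI.mem_nhds ht) hRC) hat
    have hsource : (4 : ℕ) * (a' t / a t) * Q t + Q' t = 0 := by
      push_cast at hcurv ⊢
      linarith [hic t ht]
    simpa only [hsource, mul_zero] using (ha t ht).pow_mul_logDeriv 4 (hQd t ht) hat
  obtain ⟨A, hA⟩ := hI.exists_is_const_of_deriv_eq_zero hconn.isPreconnected
    (fun t ht => (hderiv t ht).differentiableAt.differentiableWithinAt)
    (fun t ht => (hderiv t ht).deriv)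
  refine ⟨fun t ht s hs => (hA t ht).trans (hA s hs).symm, A, fun t ht => ?_⟩
  rw [eq_div_iff (pow_ne_zero 4 (hapos t ht).ne'), mul_comm]
  exact hA t ht
end
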